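/- Let G = (V, E) be a simple graph of order n and u a vertex of G with neighbors u_1, …, u_d (d ≥ 1). For i = 1, …, d−1, let G_i be the graph obtained from G − u by adding all edges joining u_i to u_{i+1}, …, u_d (that are not already present). Then P(G, x) = (x − 1) P(G − u, x) − ∑_{i=1}^{d−1} P(G_i, x). -/

import Mathlib

/-!
A proper `k`-coloring of `G` is a proper coloring `c` of `G - u` together with a color for `u`
outside `c(N(u))`, so `P(G, k) = ∑_c (k - |c(N(u))|)`. Counting each color of `c(N(u))` at its
last occurrence, `|c(N(u))|` is the number of indices `i` such that the color of `u_i` does not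
reappear among `u_{i+1}, …, u_d`, i.e. such that `c` is also a coloring of `G_i`. Exchanging the
sums gives `P(G, k) + ∑_{i=1}^{d} P(G_i, k) = k P(G - u, k)`, and `G_d = G - u`.
-/

open Polynomial

/-- `P` is the chromatic polynomial of `G`: for every natural number `k`,
`P` evaluated at `k` equals the number of proper `k`-colorings of `G`. -/
def IsChromPoly {W : Type*} (G : SimpleGraph W) (P : Polynomial ℝ) : Prop :=
  ∀ k : ℕ, P.eval (k : ℝ) = (Nat.card (G.Coloring (Fin k)) : ℝ)

open Finset

theorem Finset.card_image_eq_card_filter_forall_lt_ne {α β : Type*} [Fintype α] [LinearOrder α]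
    [DecidableEq β] (g : α → β) :
    #(univ.image g) = #{i | ∀ j, i < j → g j ≠ g i} := by
  set S : Finset α := {i | ∀ j, i < j → g j ≠ g i}
  have hinj : Set.InjOn g S := by
    intro a ha b hb hab
    simp only [S, coe_filter, mem_univ, true_and, Set.mem_ofPred_eq] at ha hb
    rcases lt_trichotomy a b with h | h | h
    · exact absurd hab.symm (ha b h)
    · exact h
    · exact absurd hab (hb a h)
  rw [← card_image_of_injOn hinj]
  congr 1
  refine Subset.antisymm (fun b hb => ?_) (image_subset_image (filter_subset _ _))
  obtain ⟨j, -, rfl⟩ := mem_image.1 hb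
  obtain ⟨m, hm, hmax⟩ := exists_max_image {i | g i = g j} id ⟨j, by simp⟩
  rw [mem_filter] at hm
  refine mem_image.2 ⟨m, mem_filter.2 ⟨mem_univ m, fun i hi hgi => ?_⟩, hm.2⟩
  exact (hmax i (by simp [hgi, hm.2])).not_gt hi

namespace SimpleGraph

variable {V W α : Type*}

def Coloring.supEquiv (G H : SimpleGraph V) :
    (G ⊔ H).Coloring α ≃ {c : G.Coloring α // ∀ ⦃a b⦄, H.Adj a b → c a ≠ c b} where
  toFun C := ⟨Coloring.mk C fun h => C.valid (Or.inl h), fun _ _ h => C.valid (Or.inr h)⟩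
  invFun c := Coloring.mk c.1 fun h => h.elim c.1.valid (c.2 ·)
  left_inv _ := rfl
  right_inv _ := rfl

def coloringEquivSigmaInduceNe (G : SimpleGraph V) [DecidableEq V] (u : V) :
    G.Coloring α ≃ Σ c : (G.induce {w | w ≠ u}).Coloring α,
      {a : α // ∀ w : {w | w ≠ u}, G.Adj u w → c w ≠ a} where
  toFun C := ⟨C.comp (Embedding.induce _).toHom, C u, fun _ h => (C.valid h).symm⟩
  invFun p := Coloring.mk (fun v => if h : v = u then p.2.1 else p.1 ⟨v, h⟩) fun {v w} hvw => by
    obtain ⟨c, a, ha⟩ := p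
    by_cases hv : v = u <;> by_cases hw : w = u <;>
      simp only [hv, hw, dif_pos, dif_neg, not_false_eq_true]
    · subst hv hw; exact (G.irrefl hvw).elim
    · subst hv; exact (ha ⟨w, hw⟩ hvw).symm
    · subst hw; exact ha ⟨v, hv⟩ hvw.symm
    · exact c.valid (v := ⟨v, hv⟩) (w := ⟨w, hw⟩) hvw
  left_inv C := by
    ext v
    by_cases hv : v = u
    · subst hv; exact dif_pos rfl
    · exact dif_neg hv
  right_inv p := by
    refine Sigma.subtype_ext ?_ (dif_pos rfl)
    ext w
    exact dif_neg w.2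

/-- With `g` enumerating the neighbours of `u` in `G - u`, the paper's `G_i` is
`G - u ⊔ joinLater g i`. -/
def joinLater {d : ℕ} (g : Fin d → W) (i : Fin d) : SimpleGraph W :=
  fromRel fun a b => a = g i ∧ ∃ j, i < j ∧ b = g j

theorem joinLater_last_eq_bot {n : ℕ} (g : Fin (n + 1) → W) :
    joinLater g (Fin.last n) = ⊥ := by
  ext a b
  simp [joinLater, (Fin.le_last _).not_gt]

theorem forall_joinLater_adj_ne_iff {d : ℕ} {g : Fin d → W} (hg : Function.Injective g)
    (i : Fin d) (c : W → α) :
    (∀ ⦃a b⦄, (joinLater g i).Adj a b → c a ≠ c b) ↔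
      ∀ j, i < j → c (g j) ≠ c (g i) := by
  refine ⟨fun h j hij => (h ⟨hg.ne hij.ne, .inl ⟨rfl, j, hij, rfl⟩⟩).symm, ?_⟩
  rintro h a b ⟨-, ⟨rfl, j, hij, rfl⟩ | ⟨rfl, j, hij, rfl⟩⟩
  · exact (h j hij).symm
  · exact h j hij

theorem card_coloring_sup_joinLater [Fintype W] [Fintype α] [DecidableEq α] (G : SimpleGraph W)
    {d : ℕ} {g : Fin d → W} (hg : Function.Injective g) (i : Fin d) :
    Nat.card ((G ⊔ joinLater g i).Coloring α) =
      #{c : G.Coloring α | ∀ j, i < j → c (g j) ≠ c (g i)} := by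
  rw [Nat.card_congr ((Coloring.supEquiv G _).trans
    (Equiv.subtypeEquivRight fun c => forall_joinLater_adj_ne_iff hg i c)),
    Nat.card_eq_fintype_card, Fintype.card_subtype]

theorem card_coloring_add_sum_card_coloring_sup_joinLater [Fintype V] [DecidableEq V]
    [Fintype α] [DecidableEq α] (G : SimpleGraph V) (u : V) {d : ℕ}
    {g : Fin d → {w | w ≠ u}}
    (hg : Function.Injective g) (hN : ∀ w : {w | w ≠ u}, G.Adj u w ↔ ∃ j, g j = w) :
    Nat.card (G.Coloring α) +
        ∑ i, Nat.card ((G.induce {w | w ≠ u} ⊔ joinLater g i).Coloring α) =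
      Fintype.card α * Nat.card ((G.induce {w | w ≠ u}).Coloring α) := by
  have fibre (c : (G.induce {w | w ≠ u}).Coloring α) :
      Nat.card {a : α // ∀ w : {w | w ≠ u}, G.Adj u w → c w ≠ a} =
        #(univ.image fun j => c (g j))ᶜ := by
    classical
    rw [Nat.card_eq_fintype_card, Fintype.card_subtype]
    congr 1
    ext a
    simp [hN]
  have swap :
      ∑ i, #{c : (G.induce {w | w ≠ u}).Coloring α | ∀ j, i < j → c (g j) ≠ c (g i)} =
      ∑ c : (G.induce {w | w ≠ u}).Coloring α, #(univ.image fun j => c (g j)) := by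
    simp only [card_image_eq_card_filter_forall_lt_ne, card_filter]
    rw [Finset.sum_comm]
    -- the two sides differ only in the instances deciding `i < j`
    congr! 3
  rw [Nat.card_congr (coloringEquivSigmaInduceNe G u), Nat.card_sigma]
  simp only [fibre, card_coloring_sup_joinLater _ hg, swap, ← sum_add_distrib,
    card_compl_add_card, sum_const, card_univ, smul_eq_mul, Nat.card_eq_fintype_card, mul_comm]

end SimpleGraph

theorem Polynomial.eq_of_eval_natCast_eq {R : Type*} [CommRing R] [IsDomain R] [CharZero R]
    {p q : R[X]} (h : ∀ n : ℕ, p.eval (n : R) = q.eval (n : R)) : p = q :=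
  eq_of_infinite_eval_eq p q (Set.infinite_of_injective_forall_mem Nat.cast_injective h)

theorem IsChromPoly.unique {W : Type*} {G : SimpleGraph W} {P Q : ℝ[X]} (hP : IsChromPoly G P)
    (hQ : IsChromPoly G Q) : P = Q :=
  eq_of_eval_natCast_eq fun k => (hP k).trans (hQ k).symm

open SimpleGraph

theorem stmt16 {V : Type*} [Fintype V] [DecidableEq V] (G : SimpleGraph V)
    (u : V) (d : ℕ) (hd : 1 ≤ d) (f : Fin d → V)
    (hinj : Function.Injective f)
    (hf : ∀ v : V, G.Adj u v ↔ ∃ j, f j = v)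
    (P Pu : Polynomial ℝ) (Pi : Fin d → Polynomial ℝ)
    (hP : IsChromPoly G P)
    (hPu : IsChromPoly (G.induce {w | w ≠ u}) Pu)
    (hPi : ∀ i : Fin d, IsChromPoly
      ((G.induce {w | w ≠ u}) ⊔ SimpleGraph.fromRel
        (fun a b : {w : V // w ≠ u} => a.1 = f i ∧ ∃ j, i < j ∧ b.1 = f j)) (Pi i)) :
    P = (Polynomial.X - 1) * Pu -
      ∑ i ∈ Finset.univ.filter (fun i : Fin d => (i : ℕ) + 1 < d), Pi i := by
  obtain ⟨n, rfl⟩ : ∃ n, d = n + 1 := ⟨d - 1, by omega⟩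
  have hfu (j : Fin (n + 1)) : f j ≠ u := (G.ne_of_adj ((hf _).2 ⟨j, rfl⟩)).symm
  let g : Fin (n + 1) → {w : V | w ≠ u} := fun j => ⟨f j, hfu j⟩
  have hg : Function.Injective g := fun i j h => hinj (congrArg Subtype.val h)
  have hN (w : {w : V | w ≠ u}) : G.Adj u w ↔ ∃ j, g j = w := by simp [hf, g, Subtype.ext_iff]
  have hPi' (i : Fin (n + 1)) : IsChromPoly (G.induce {w | w ≠ u} ⊔ joinLater g i) (Pi i) := by
    convert hPi i using 3
    simp only [joinLater, g, Subtype.ext_iff]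
    -- the relations live on `↥{w | w ≠ u}` and `{w // w ≠ u}`, equal only up to unfolding
    rfl
  have hsum : P + ∑ i, Pi i = X * Pu := eq_of_eval_natCast_eq fun k => by
    simp only [eval_add, eval_finsetSum, eval_mul, eval_X, hP k, hPu k, hPi' _ k]
    exact_mod_cast Fintype.card_fin k ▸
      card_coloring_add_sum_card_coloring_sup_joinLater (α := Fin k) G u hg hN
  have hlast : Pi (Fin.last n) = Pu :=
    (hPi' _).unique (by rwa [joinLater_last_eq_bot, sup_bot_eq])
  have hfilter :
      univ.filter (fun i : Fin (n + 1) => (i : ℕ) + 1 < n + 1) = univ.erase (Fin.last n) := by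
    ext i
    simp only [mem_filter, mem_univ, true_and, mem_erase, ne_eq, and_true, Fin.ext_iff,
      Fin.val_last]
    omega
  rw [hfilter, sum_erase_eq_sub (mem_univ _), hlast]
  linear_combination hsum
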